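/- arXiv:1509.03777 — 9 statements merged into one kernel-verified Lean document; each statement's English description precedes it below -/
import Mathlib

section
/- Let α and γ be finite types and let T be a row-stochastic matrix on α ⊕ γ such that every state Sum.inl a is absorbing. Suppose every non-absorbing state is transient in the sense that for each b : γ there exist n : ℕ and a : α with (T ^ n) (Sum.inr b) (Sum.inl a) > 0. Then det (1 - S2) ≠ 0, where S2 : Matrix γ γ is given by S2 b b' = T (Sum.inr b) (Sum.inr b'). -/
theorem det_one_sub_S2_ne_zero {α γ : Type*} [Fintype α] [Fintype γ]
    [DecidableEq α] [DecidableEq γ]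
    (T : Matrix (α ⊕ γ) (α ⊕ γ) ℝ)
    (hT0 : ∀ s s', 0 ≤ T s s') (hT1 : ∀ s, ∑ s', T s s' = 1)
    (habs : ∀ (a : α) (s' : α ⊕ γ),
      T (Sum.inl a) s' = if s' = Sum.inl a then 1 else 0)
    (htrans : ∀ b : γ, ∃ (n : ℕ) (a : α), 0 < (T ^ n) (Sum.inr b) (Sum.inl a)) :
    Matrix.det (1 - Matrix.of fun b b' : γ => T (Sum.inr b) (Sum.inr b')) ≠ 0 := by
  set S2 : Matrix γ γ ℝ := Matrix.of fun b b' : γ => T (Sum.inr b) (Sum.inr b') with hS2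
  -- T^n entries nonneg
  have hTn0 : ∀ n s s', 0 ≤ (T ^ n) s s' := by
    intro n
    induction n with
    | zero => intro s s'; simp [Matrix.one_apply]; positivity
    | succ n ih =>
      intro s s'
      rw [pow_succ, Matrix.mul_apply]
      exact Finset.sum_nonneg fun t _ => mul_nonneg (ih s t) (hT0 t s')
  -- T^n row sums = 1
  have hTn1 : ∀ n s, ∑ s', (T ^ n) s s' = 1 := by
    intro n
    induction n with
    | zero => intro s; simp [Matrix.one_apply]
    | succ n ih =>
      intro s
      simp only [pow_succ, Matrix.mul_apply]
      rw [Finset.sum_comm]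
      calc ∑ t, ∑ s', (T ^ n) s t * T t s'
          = ∑ t, (T ^ n) s t * ∑ s', T t s' := by
            exact Finset.sum_congr rfl fun t _ => (Finset.mul_sum _ _ _).symm
        _ = 1 := by simp [hT1, ih]
  -- S2^n = restriction of T^n
  have hpow : ∀ n b b', (S2 ^ n) b b' = (T ^ n) (Sum.inr b) (Sum.inr b') := by
    intro n
    induction n with
    | zero =>
      intro b b'
      simp [Matrix.one_apply, Sum.inr.injEq]
    | succ n ih =>
      intro b b'
      rw [pow_succ, pow_succ, Matrix.mul_apply, Matrix.mul_apply,
        Fintype.sum_sum_type]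
      have h0 : ∀ a : α, (T ^ n) (Sum.inr b) (Sum.inl a) * T (Sum.inl a) (Sum.inr b') = 0 := by
        intro a; rw [habs]; simp
      simp only [h0, Finset.sum_const_zero, zero_add]
      exact Finset.sum_congr rfl fun c _ => by rw [ih]; rfl
  have hS0 : ∀ n (b b' : γ), 0 ≤ (S2 ^ n) b b' := fun n b b' => by
    rw [hpow]; exact hTn0 n _ _
  -- row sums of S2^n
  set rs : ℕ → γ → ℝ := fun n b => ∑ b', (S2 ^ n) b b' with hrs
  have hrs_le1 : ∀ n b, rs n b ≤ 1 := by
    intro n b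
    have := hTn1 n (Sum.inr b)
    rw [Fintype.sum_sum_type] at this
    have h1 : rs n b = ∑ c : γ, (T ^ n) (Sum.inr b) (Sum.inr c) :=
      Finset.sum_congr rfl fun c _ => hpow n b c
    have h2 : 0 ≤ ∑ a : α, (T ^ n) (Sum.inr b) (Sum.inl a) :=
      Finset.sum_nonneg fun a _ => hTn0 n _ _
    linarith [this, h1.ge, h1.le]
  have hstep : ∀ n b, rs (n + 1) b ≤ rs n b := by
    intro n b
    simp only [hrs, pow_succ, Matrix.mul_apply]
    rw [Finset.sum_comm]
    calc ∑ c, ∑ b', (S2 ^ n) b c * S2 c b'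
        = ∑ c, (S2 ^ n) b c * ∑ b', S2 c b' := by simp [Finset.mul_sum]
      _ ≤ ∑ c, (S2 ^ n) b c * 1 := by
          apply Finset.sum_le_sum
          intro c _
          apply mul_le_mul_of_nonneg_left _ (hS0 n b c)
          have := hrs_le1 1 c
          simpa [hrs] using this
      _ = rs n b := by simp [hrs]
  have hanti : ∀ b m n, m ≤ n → rs n b ≤ rs m b := by
    intro b m n hmn
    induction n, hmn using Nat.le_induction with
    | base => exact le_rfl
    | succ n hmn ih => exact le_trans (hstep n b) ih
  -- for each b, some n with rs n b < 1
  have hlt : ∀ b, ∃ n, rs n b < 1 := by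
    intro b
    obtain ⟨n, a, ha⟩ := htrans b
    refine ⟨n, ?_⟩
    have := hTn1 n (Sum.inr b)
    rw [Fintype.sum_sum_type] at this
    have h1 : rs n b = ∑ c : γ, (T ^ n) (Sum.inr b) (Sum.inr c) :=
      Finset.sum_congr rfl fun c _ => hpow n b c
    have h2 : (T ^ n) (Sum.inr b) (Sum.inl a) ≤ ∑ a' : α, (T ^ n) (Sum.inr b) (Sum.inl a') :=
      Finset.single_le_sum (fun a' _ => hTn0 n _ _) (Finset.mem_univ a)
    linarith
  choose nb hnb using hlt
  set N : ℕ := Finset.univ.sup nb with hN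
  have hrsN : ∀ b, rs N b < 1 := fun b =>
    lt_of_le_of_lt (hanti b (nb b) N (Finset.le_sup (Finset.mem_univ b))) (hnb b)
  -- main argument
  intro hdet
  obtain ⟨v, hv0, hv⟩ := (Matrix.exists_mulVec_eq_zero_iff (M := 1 - S2)).2 hdet
  have hfix : S2.mulVec v = v := by
    have := hv
    rw [Matrix.sub_mulVec, Matrix.one_mulVec, sub_eq_zero] at this
    exact this.symm
  have hfixN : (S2 ^ N).mulVec v = v := by
    induction N with
    | zero => simp
    | succ n ih =>
      rw [pow_succ, ← Matrix.mulVec_mulVec, hfix, ih]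
  -- pick b maximizing |v b|
  have hne : (Finset.univ : Finset γ).Nonempty := by
    by_contra h
    apply hv0
    funext b
    exact absurd ⟨b, Finset.mem_univ b⟩ h
  obtain ⟨b0, -, hb0⟩ := Finset.exists_max_image Finset.univ (fun b => |v b|) hne
  have hvb0 : 0 < |v b0| := by
    rcases Function.ne_iff.1 hv0 with ⟨b, hb⟩
    exact lt_of_lt_of_le (abs_pos.2 hb) (hb0 b (Finset.mem_univ b))
  have : |v b0| < |v b0| := by
    calc |v b0| = |((S2 ^ N).mulVec v) b0| := by rw [hfixN]
      _ = |∑ b', (S2 ^ N) b0 b' * v b'| := by rw [Matrix.mulVec, dotProduct]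
      _ ≤ ∑ b', |(S2 ^ N) b0 b' * v b'| := Finset.abs_sum_le_sum_abs _ _
      _ = ∑ b', (S2 ^ N) b0 b' * |v b'| := by
          refine Finset.sum_congr rfl fun b' _ => ?_
          rw [abs_mul, abs_of_nonneg (hS0 N b0 b')]
      _ ≤ ∑ b', (S2 ^ N) b0 b' * |v b0| := by
          apply Finset.sum_le_sum
          intro b' _
          exact mul_le_mul_of_nonneg_left (hb0 b' (Finset.mem_univ b')) (hS0 N b0 b')
      _ = rs N b0 * |v b0| := by rw [← Finset.sum_mul]
      _ < 1 * |v b0| := by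
          exact mul_lt_mul_of_pos_right (hrsN b0) hvb0
      _ = |v b0| := one_mul _
  exact lt_irrefl _ this
end

section
/- Let α and γ be finite types and let T be a row-stochastic matrix on α ⊕ γ such that every state Sum.inl a is absorbing, and suppose det (1 - S2) ≠ 0. Then there exists a unique matrix P : (α ⊕ γ) → α → ℝ satisfying (i) P (Sum.inl a) a' = 1 if a = a' and 0 otherwise, and (ii) ∑ s', T s s' * P s' a = P s a for all states s and all a : α; moreover this P is given by Cramer's rule as P s a = - det (M.updateColumn s e) / det M, where e : α ⊕ γ → ℝ is the standard basis vector supported at Sum.inl a (e x = 1 if x = Sum.inl a, else 0) and M.updateColumn s e replaces the column of M indexed by s with e. -/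
/-!
Since the rows `Sum.inl a` of `T` are absorbing, `T = fromBlocks 1 0 S1 S2`, so
`M = diagonal (Sum.elim 0 1) - T` with the first factor the projection onto the transient states.
For a column `v = P · a`, the absorbing rows of `M *ᵥ v = -e_{inl a}` read `v (inl a') = δ a a'`
and the transient rows read `(T *ᵥ v) (inr b) = v (inr b)`; the absorbing rows of `T *ᵥ v = v`
hold automatically. Thus the conditions on `P` are exactly this linear system, column by column,
and `det M = ± det (1 - S2) ≠ 0` makes it uniquely solvable, with the solution given by Cramer's
rule.
-/

open Matrix

namespace Matrix

variable {n K : Type*} [Fintype n] [DecidableEq n] [Field K]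

theorem existsUnique_forall_mulVec_eq_of_det_ne_zero {ι : Type*} {A : Matrix n n K}
    (hA : A.det ≠ 0) (B : ι → n → K) :
    ∃! X : n → ι → K, ∀ i, A *ᵥ (fun s => X s i) = B i := by
  have hAu : IsUnit A := (isUnit_iff_isUnit_det A).2 hA.isUnit
  choose x hx using fun i => mulVec_surjective_iff_isUnit.2 hAu (B i)
  refine ⟨fun s i => x i s, hx, fun X hX => funext fun s => funext fun i => ?_⟩
  exact congrFun (mulVec_injective_iff_isUnit.2 hAu ((hX i).trans (hx i).symm)) s

theorem eq_det_updateCol_div_det_of_mulVec_eq {A : Matrix n n K} (hA : A.det ≠ 0)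
    {x b : n → K} (h : A *ᵥ x = b) (i : n) :
    x i = (A.updateCol i b).det / A.det := by
  have hcramer : cramer A b = A.det • x := by
    rw [← h, cramer_eq_adjugate_mulVec, mulVec_mulVec, adjugate_mul, smul_mulVec, one_mulVec]
  rw [← cramer_apply, hcramer, Pi.smul_apply, smul_eq_mul, mul_div_cancel_left₀ _ hA]

end Matrix

section Absorbing

variable {α γ R : Type*} [DecidableEq α] [DecidableEq γ] [CommRing R]
  {T : Matrix (α ⊕ γ) (α ⊕ γ) R}

theorem neg_fromBlocks_toBlocks_sub_one_of_absorbing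
    (habs : ∀ (a : α) (s' : α ⊕ γ), T (Sum.inl a) s' = if s' = Sum.inl a then 1 else 0) :
    -fromBlocks 1 0 T.toBlocks₂₁ (T.toBlocks₂₂ - 1) = diagonal (Sum.elim 0 1) - T := by
  ext (a | b) (a' | b') <;> simp [habs, one_apply, diagonal_apply, toBlocks₂₁, toBlocks₂₂, eq_comm]

variable [Fintype α] [Fintype γ]

theorem det_neg_fromBlocks_one_zero_sub_one (C : Matrix γ α R) (D : Matrix γ γ R) :
    (-fromBlocks 1 0 C (D - 1)).det = (-1) ^ Fintype.card α * (1 - D).det := by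
  rw [fromBlocks_neg, neg_zero, neg_sub, det_fromBlocks_zero₁₂, det_neg, det_one, mul_one]

theorem mulVec_inl_of_absorbing
    (habs : ∀ (a : α) (s' : α ⊕ γ), T (Sum.inl a) s' = if s' = Sum.inl a then 1 else 0)
    (v : α ⊕ γ → R) (a : α) :
    (T *ᵥ v) (Sum.inl a) = v (Sum.inl a) := by
  simp [mulVec, dotProduct, habs]

theorem mulVec_eq_neg_single_iff_of_absorbing
    (habs : ∀ (a : α) (s' : α ⊕ γ), T (Sum.inl a) s' = if s' = Sum.inl a then 1 else 0)
    (v : α ⊕ γ → R) (a : α) :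
    ((∀ a', v (Sum.inl a') = if a' = a then 1 else 0) ∧ T *ᵥ v = v) ↔
      (diagonal (Sum.elim 0 1) - T) *ᵥ v = -fun x => if x = Sum.inl a then 1 else 0 := by
  simp only [sub_mulVec, mulVec_diagonal, funext_iff, Sum.forall, Pi.sub_apply, Pi.neg_apply,
    mulVec_inl_of_absorbing habs, Sum.elim_inl, Sum.elim_inr, Sum.inl.injEq, reduceCtorEq,
    Pi.zero_apply, Pi.one_apply, zero_mul, one_mul, zero_sub, neg_inj, if_false, neg_zero,
    sub_eq_zero, implies_true, true_and]
  exact and_congr_right' (forall_congr' fun _ => eq_comm)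

theorem absorption_equations_iff_mulVec_eq_of_absorbing
    (habs : ∀ (a : α) (s' : α ⊕ γ), T (Sum.inl a) s' = if s' = Sum.inl a then 1 else 0)
    (P : α ⊕ γ → α → R) :
    ((∀ a a' : α, P (Sum.inl a) a' = if a = a' then 1 else 0) ∧
      ∀ (s : α ⊕ γ) (a : α), ∑ s', T s s' * P s' a = P s a) ↔
    ∀ a, (diagonal (Sum.elim 0 1) - T) *ᵥ (fun s => P s a) =
      -fun x => if x = Sum.inl a then 1 else 0 := by
  simp only [← mulVec_eq_neg_single_iff_of_absorbing habs, forall_and, funext_iff]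
  exact and_congr forall_comm forall_comm

end Absorbing

theorem fixation_probability_formula_general {α γ : Type*} [Fintype α] [Fintype γ]
    [DecidableEq α] [DecidableEq γ]
    (T : Matrix (α ⊕ γ) (α ⊕ γ) ℝ)
    (habs : ∀ (a : α) (s' : α ⊕ γ),
      T (Sum.inl a) s' = if s' = Sum.inl a then 1 else 0)
    (S1 : Matrix γ α ℝ) (hS1 : S1 = Matrix.of fun b a => T (Sum.inr b) (Sum.inl a))
    (S2 : Matrix γ γ ℝ) (hS2 : S2 = Matrix.of fun b b' => T (Sum.inr b) (Sum.inr b'))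
    (M : Matrix (α ⊕ γ) (α ⊕ γ) ℝ) (hM : M = -Matrix.fromBlocks 1 0 S1 (S2 - 1))
    (hdet : Matrix.det (1 - S2) ≠ 0) :
    (∃! P : (α ⊕ γ) → α → ℝ,
      (∀ a a' : α, P (Sum.inl a) a' = if a = a' then 1 else 0) ∧
      (∀ (s : α ⊕ γ) (a : α), ∑ s', T s s' * P s' a = P s a)) ∧
    (∀ P : (α ⊕ γ) → α → ℝ,
      ((∀ a a' : α, P (Sum.inl a) a' = if a = a' then 1 else 0) ∧
       (∀ (s : α ⊕ γ) (a : α), ∑ s', T s s' * P s' a = P s a)) →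
      ∀ (s : α ⊕ γ) (a : α),
        P s a = - Matrix.det (M.updateCol s fun x => if x = Sum.inl a then 1 else 0)
          / Matrix.det M) := by
  subst hS1 hS2
  have hMdet : M.det ≠ 0 := by
    rw [hM, det_neg_fromBlocks_one_zero_sub_one]
    exact mul_ne_zero (pow_ne_zero _ (neg_ne_zero.2 one_ne_zero)) hdet
  have hM' : M = diagonal (Sum.elim 0 1) - T :=
    hM.trans (neg_fromBlocks_toBlocks_sub_one_of_absorbing habs)
  simp only [absorption_equations_iff_mulVec_eq_of_absorbing habs, ← hM']
  refine ⟨existsUnique_forall_mulVec_eq_of_det_ne_zero hMdet _, fun P hP s a => ?_⟩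
  rw [eq_det_updateCol_div_det_of_mulVec_eq hMdet (hP a) s, ← neg_one_smul ℝ,
    det_updateCol_smul, neg_one_mul, neg_div]

theorem fixation_probability_formula {α γ : Type*} [Fintype α] [Fintype γ]
    [DecidableEq α] [DecidableEq γ]
    (T : Matrix (α ⊕ γ) (α ⊕ γ) ℝ)
    (hT0 : ∀ s s', 0 ≤ T s s') (hT1 : ∀ s, ∑ s', T s s' = 1)
    (habs : ∀ (a : α) (s' : α ⊕ γ),
      T (Sum.inl a) s' = if s' = Sum.inl a then 1 else 0)
    (S1 : Matrix γ α ℝ) (hS1 : S1 = Matrix.of fun b a => T (Sum.inr b) (Sum.inl a))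
    (S2 : Matrix γ γ ℝ) (hS2 : S2 = Matrix.of fun b b' => T (Sum.inr b) (Sum.inr b'))
    (M : Matrix (α ⊕ γ) (α ⊕ γ) ℝ) (hM : M = -Matrix.fromBlocks 1 0 S1 (S2 - 1))
    (hdet : Matrix.det (1 - S2) ≠ 0) :
    (∃! P : (α ⊕ γ) → α → ℝ,
      (∀ a a' : α, P (Sum.inl a) a' = if a = a' then 1 else 0) ∧
      (∀ (s : α ⊕ γ) (a : α), ∑ s', T s s' * P s' a = P s a)) ∧
    (∀ P : (α ⊕ γ) → α → ℝ,
      ((∀ a a' : α, P (Sum.inl a) a' = if a = a' then 1 else 0) ∧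
       (∀ (s : α ⊕ γ) (a : α), ∑ s', T s s' * P s' a = P s a)) →
      ∀ (s : α ⊕ γ) (a : α),
        P s a = - Matrix.det (M.updateCol s fun x => if x = Sum.inl a then 1 else 0)
          / Matrix.det M) :=
  fixation_probability_formula_general T habs S1 hS1 S2 hS2 M hM hdet
end

section
/- Let α and γ be finite types and let p : (α ⊕ γ) → (α ⊕ γ) → Polynomial ℝ be such that for every β ≥ 0 the matrix T β defined by (T β) s s' = (p s s').eval β is row-stochastic on α ⊕ γ with every state Sum.inl a absorbing and det (1 - S2 β) ≠ 0, where (S2 β) b b' = (T β) (Sum.inr b) (Sum.inr b'). For β ≥ 0 let ρ β : (α ⊕ γ) → α → ℝ be the unique matrix with ρ β (Sum.inl a) a' = (if a = a' then 1 else 0) and ∑ s', (T β) s s' * ρ β s' a = ρ β s a for all s and a. Then for any states s, s' : α ⊕ γ and any a, a' : α, either ρ β s a = ρ β s' a' for every β ≥ 0, or the set {β : ℝ | β ≥ 0 ∧ ρ β s a = ρ β s' a'} is finite. In particular, if the two fixation probabilities differ for a single value of β ≥ 0, then they differ for all sufficiently small β > 0. -/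
theorem fixation_probabilities_equal_or_finitely_often {α γ : Type*}
    [Fintype α] [Fintype γ] [DecidableEq α] [DecidableEq γ]
    (p : (α ⊕ γ) → (α ⊕ γ) → Polynomial ℝ)
    (T : ℝ → Matrix (α ⊕ γ) (α ⊕ γ) ℝ)
    (hT : ∀ (β : ℝ) (s s' : α ⊕ γ), T β s s' = (p s s').eval β)
    (hT0 : ∀ β ≥ (0 : ℝ), ∀ s s', 0 ≤ T β s s')
    (hT1 : ∀ β ≥ (0 : ℝ), ∀ s, ∑ s', T β s s' = 1)
    (habs : ∀ β ≥ (0 : ℝ), ∀ (a : α) (s' : α ⊕ γ),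
      T β (Sum.inl a) s' = if s' = Sum.inl a then 1 else 0)
    (hdet : ∀ β ≥ (0 : ℝ),
      Matrix.det (1 - Matrix.of fun b b' : γ => T β (Sum.inr b) (Sum.inr b')) ≠ 0)
    (ρ : ℝ → (α ⊕ γ) → α → ℝ)
    (hρ1 : ∀ β ≥ (0 : ℝ), ∀ a a' : α,
      ρ β (Sum.inl a) a' = if a = a' then 1 else 0)
    (hρ2 : ∀ β ≥ (0 : ℝ), ∀ (s : α ⊕ γ) (a : α),
      ∑ s', T β s s' * ρ β s' a = ρ β s a)
    (s s' : α ⊕ γ) (a a' : α) :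
    (∀ β ≥ (0 : ℝ), ρ β s a = ρ β s' a') ∨
      {β : ℝ | β ≥ 0 ∧ ρ β s a = ρ β s' a'}.Finite := by
  classical
  set q : Matrix γ γ (Polynomial ℝ) :=
    1 - Matrix.of (fun b b' : γ => p (Sum.inr b) (Sum.inr b')) with hq
  set Q : Polynomial ℝ := q.det with hQdef
  have hqmap : ∀ β : ℝ, (Polynomial.evalRingHom β).mapMatrix q =
      1 - Matrix.of (fun b b' : γ => T β (Sum.inr b) (Sum.inr b')) := by
    intro β
    ext b b'
    simp [q, Matrix.one_apply, hT, apply_ite (Polynomial.eval β)]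
  have hQeval : ∀ β : ℝ, Q.eval β =
      Matrix.det (1 - Matrix.of (fun b b' : γ => T β (Sum.inr b) (Sum.inr b'))) := by
    intro β
    have h := (Polynomial.evalRingHom β).map_det q
    rw [hqmap β] at h
    simpa using h
  have hQ : ∀ β ≥ (0 : ℝ), Q.eval β ≠ 0 := fun β hβ => (hQeval β) ▸ hdet β hβ
  set N : (α ⊕ γ) → α → Polynomial ℝ := fun t a₀ =>
    Sum.rec (fun a₁ => if a₁ = a₀ then Q else 0)
      (fun b => ∑ b', q.adjugate b b' * p (Sum.inr b') (Sum.inl a₀)) t with hN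
  have main : ∀ β ≥ (0 : ℝ), ∀ (t : α ⊕ γ) (a₀ : α),
      ρ β t a₀ * Q.eval β = (N t a₀).eval β := by
    intro β hβ t a₀
    cases t with
    | inl a₁ =>
      by_cases h : a₁ = a₀ <;> simp [hN, h, hρ1 β hβ]
    | inr b =>
      set A : Matrix γ γ ℝ :=
        1 - Matrix.of (fun b b' : γ => T β (Sum.inr b) (Sum.inr b')) with hA
      set x : γ → ℝ := fun b => ρ β (Sum.inr b) a₀ with hx
      set w : γ → ℝ := fun b => T β (Sum.inr b) (Sum.inl a₀) with hw
      have hAx : A.mulVec x = w := by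
        funext b₁
        have h2 := hρ2 β hβ (Sum.inr b₁) a₀
        rw [Fintype.sum_sum_type] at h2
        have hl : ∀ a₂ : α, T β (Sum.inr b₁) (Sum.inl a₂) * ρ β (Sum.inl a₂) a₀
            = if a₂ = a₀ then T β (Sum.inr b₁) (Sum.inl a₂) else 0 := by
          intro a₂
          rw [hρ1 β hβ]
          by_cases h : a₂ = a₀ <;> simp [h]
        simp only [hl] at h2
        rw [Finset.sum_ite_eq' Finset.univ a₀] at h2
        simp only [Finset.mem_univ, if_true] at h2
        have hAxb : (A.mulVec x) b₁ = x b₁ - ∑ b', T β (Sum.inr b₁) (Sum.inr b') * x b' := by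
          simp [hA, Matrix.mulVec, dotProduct, Matrix.one_apply, sub_mul,
            Finset.sum_sub_distrib, Finset.sum_ite_eq]
        rw [hAxb]
        simp only [hw]
        linarith [h2]
      have hdetA : A.det = Q.eval β := (hQeval β).symm
      have hadjmul : A.adjugate.mulVec w = A.det • x := by
        rw [← hAx, Matrix.mulVec_mulVec, Matrix.adjugate_mul, Matrix.smul_mulVec,
          Matrix.one_mulVec]
      have hentry : ∑ b', A.adjugate b b' * w b' = A.det * x b := by
        have := congrFun hadjmul b
        simpa [Matrix.mulVec, dotProduct] using this
      have hadjeval : ∀ b₁ b₂ : γ, (q.adjugate b₁ b₂).eval β = A.adjugate b₁ b₂ := by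
        intro b₁ b₂
        have h := (Polynomial.evalRingHom β).map_adjugate q
        rw [hqmap β] at h
        rw [hA, ← h]
        simp [RingHom.mapMatrix_apply, Matrix.map_apply]
      calc ρ β (Sum.inr b) a₀ * Q.eval β = A.det * x b := by rw [hdetA]; ring
        _ = ∑ b', A.adjugate b b' * w b' := hentry.symm
        _ = (N (Sum.inr b) a₀).eval β := by
            simp [hN, Polynomial.eval_finset_sum, hadjeval, hw, hT]
  set D : Polynomial ℝ := N s a - N s' a' with hD
  have hiff : ∀ β ≥ (0 : ℝ), (ρ β s a = ρ β s' a' ↔ D.eval β = 0) := by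
    intro β hβ
    rw [hD, Polynomial.eval_sub, sub_eq_zero, ← main β hβ s a, ← main β hβ s' a']
    exact ⟨fun h => by rw [h], fun h => mul_right_cancel₀ (hQ β hβ) h⟩
  by_cases hD0 : D = 0
  · left
    intro β hβ
    exact (hiff β hβ).mpr (by simp [hD0])
  · right
    apply (Polynomial.finite_setOf_isRoot hD0).subset
    rintro β ⟨hβ, heq⟩
    exact (hiff β hβ).mp heq
end

section
/- Let α and γ be finite types and let p : (α ⊕ γ) → (α ⊕ γ) → Polynomial ℝ be such that for every β ≥ 0 the matrix T β defined by (T β) s s' = (p s s').eval β is row-stochastic on α ⊕ γ with every state Sum.inl a absorbing and det (1 - S2 β) ≠ 0, where (S2 β) b b' = (T β) (Sum.inr b) (Sum.inr b'). For β ≥ 0 let t β : (α ⊕ γ) → ℝ be the unique vector with t β (Sum.inl a) = 0 for all a : α and t β (Sum.inr b) = 1 + ∑ s', (T β) (Sum.inr b) s' * t β s' for all b : γ. Then for any states s, s' : α ⊕ γ, either t β s = t β s' for every β ≥ 0, or the set {β : ℝ | β ≥ 0 ∧ t β s = t β s'} is finite. In particular, if the two absorption times differ for a single value of β ≥ 0,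 then they differ for all sufficiently small β > 0. -/
open Polynomial Matrix in
theorem absorption_times_equal_or_finitely_often {α γ : Type*}
    [Fintype α] [Fintype γ] [DecidableEq α] [DecidableEq γ]
    (p : (α ⊕ γ) → (α ⊕ γ) → Polynomial ℝ)
    (T : ℝ → Matrix (α ⊕ γ) (α ⊕ γ) ℝ)
    (hT : ∀ (β : ℝ) (s s' : α ⊕ γ), T β s s' = (p s s').eval β)
    (hT0 : ∀ β ≥ (0 : ℝ), ∀ s s', 0 ≤ T β s s')
    (hT1 : ∀ β ≥ (0 : ℝ), ∀ s, ∑ s', T β s s' = 1)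
    (habs : ∀ β ≥ (0 : ℝ), ∀ (a : α) (s' : α ⊕ γ),
      T β (Sum.inl a) s' = if s' = Sum.inl a then 1 else 0)
    (hdet : ∀ β ≥ (0 : ℝ),
      Matrix.det (1 - Matrix.of fun b b' : γ => T β (Sum.inr b) (Sum.inr b')) ≠ 0)
    (t : ℝ → (α ⊕ γ) → ℝ)
    (ht1 : ∀ β ≥ (0 : ℝ), ∀ a : α, t β (Sum.inl a) = 0)
    (ht2 : ∀ β ≥ (0 : ℝ), ∀ b : γ,
      t β (Sum.inr b) = 1 + ∑ s', T β (Sum.inr b) s' * t β s')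
    (s s' : α ⊕ γ) :
    (∀ β ≥ (0 : ℝ), t β s = t β s') ∨
      {β : ℝ | β ≥ 0 ∧ t β s = t β s'}.Finite := by
  classical
  set M : Matrix γ γ (Polynomial ℝ) :=
    1 - Matrix.of (fun b b' : γ => p (Sum.inr b) (Sum.inr b')) with hM
  set N : (α ⊕ γ) → Polynomial ℝ :=
    Sum.elim (fun _ => 0) (fun b => ∑ b', M.adjugate b b') with hNdef
  have hmap : ∀ β : ℝ, M.map (Polynomial.evalRingHom β) =
      1 - Matrix.of (fun b b' : γ => T β (Sum.inr b) (Sum.inr b')) := by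
    intro β
    ext b b'
    by_cases h : b = b' <;>
      simp [hM, Matrix.map_apply, Matrix.sub_apply, Matrix.one_apply, hT, h]
  have hDeval : ∀ β : ℝ, (M.det).eval β =
      Matrix.det (1 - Matrix.of fun b b' : γ => T β (Sum.inr b) (Sum.inr b')) := by
    intro β
    have := RingHom.map_det (Polynomial.evalRingHom β) M
    simp only [RingHom.mapMatrix_apply] at this
    rw [← hmap β, ← this]
    rfl
  have key : ∀ β ≥ (0 : ℝ), ∀ x, t β x * (M.det).eval β = (N x).eval β := by
    intro β hβ x
    set A : Matrix γ γ ℝ :=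
      1 - Matrix.of (fun b b' : γ => T β (Sum.inr b) (Sum.inr b')) with hA
    set v : γ → ℝ := fun b => t β (Sum.inr b) with hv
    have hAv : A *ᵥ v = fun _ => 1 := by
      funext b
      have h2 := ht2 β hβ b
      simp only [Fintype.sum_sum_type] at h2
      have hzero : ∀ a : α, T β (Sum.inr b) (Sum.inl a) * t β (Sum.inl a) = 0 := by
        intro a; rw [ht1 β hβ a, mul_zero]
      simp only [Matrix.mulVec, dotProduct, hA, Matrix.sub_apply, Matrix.one_apply,
        sub_mul, Finset.sum_sub_distrib, Matrix.of_apply, ite_mul, one_mul, zero_mul,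
        Finset.sum_ite_eq, Finset.mem_univ, if_true]
      simp only [ht1 β hβ, mul_zero, Finset.sum_const_zero, zero_add] at h2
      show t β (Sum.inr b) - ∑ x : γ, T β (Sum.inr b) (Sum.inr x) * t β (Sum.inr x) = 1
      linarith [h2]
    have hsmul : (M.det).eval β • v = A.adjugate *ᵥ (fun _ => (1 : ℝ)) := by
      rw [← hAv, Matrix.mulVec_mulVec, Matrix.adjugate_mul, hDeval β, ← hA,
        Matrix.smul_mulVec, Matrix.one_mulVec]
    have hadj : ∀ b b' : γ, A.adjugate b b' = (M.adjugate b b').eval β := by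
      intro b b'
      have := RingHom.map_adjugate (Polynomial.evalRingHom β) M
      simp only [RingHom.mapMatrix_apply] at this
      rw [hA, ← hmap β, ← this]
      rfl
    cases x with
    | inl a => simp [hNdef, ht1 β hβ a]
    | inr b =>
      have hb := congrFun hsmul b
      simp only [Pi.smul_apply, smul_eq_mul, Matrix.mulVec, dotProduct, mul_one] at hb
      simp only [hNdef, Sum.elim_inr, Polynomial.eval_finset_sum]
      rw [mul_comm]
      exact hb.trans (Finset.sum_congr rfl fun b' _ => hadj b b')
  by_cases hQ : N s - N s' = 0
  · left
    intro β hβ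
    have h1 := key β hβ s
    have h2 := key β hβ s'
    have hNe : (N s).eval β = (N s').eval β := by
      have : N s = N s' := by linear_combination hQ
      rw [this]
    have hD : (M.det).eval β ≠ 0 := by rw [hDeval β]; exact hdet β hβ
    have := h1.trans (hNe.trans h2.symm)
    exact mul_right_cancel₀ hD this
  · right
    apply Set.Finite.subset (Polynomial.finite_setOf_isRoot hQ)
    rintro β ⟨hβ, heq⟩
    have h1 := key β hβ s
    have h2 := key β hβ s'
    simp only [Set.mem_setOf_eq, Polynomial.IsRoot, Polynomial.eval_sub]
    rw [← h1, ← h2, heq]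
    ring
end

section
/- Let N n : ℕ with 0 < N and 0 < n, let E D : Matrix (Fin N) (Fin N) ℝ have nonnegative entries with ∑ k, D i k > 0 for every i, let a : Fin n → Fin n → ℝ be a payoff matrix, let β ≥ 0 be the selection intensity and ε ∈ [0,1] the mutation rate. For a state s : Fin N → Fin n define the payoff u s i = ∑ j, E i j * a (s i) (s j), the fitness f s i = Real.exp (β * u s i), and the transition kernel of the birth-death process T s s' = ∑ i, ∑ j, ∑ c : Fin n, (f s i / ∑ k, f s k) * (D i j / ∑ k, D i k) * ((1 - ε) * (if c = s i then 1 else 0) + ε / n) * (if s' = Function.update s j c then 1 else 0). If π : Equiv.Perm (Fin N) satisfies E (π i) (π j) = E i j and D (π i) (π j) = D i j for all i, j, then T (s ∘ π) (s' ∘ π) = T s s' for all states s, s' : Fin N → Fin n. -/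
/-- Total payoff of player `i` in state `s` on interaction graph `E`. -/
noncomputable def gamePayoff {N n : ℕ} (E : Matrix (Fin N) (Fin N) ℝ)
    (a : Fin n → Fin n → ℝ) (s : Fin N → Fin n) (i : Fin N) : ℝ :=
  ∑ j, E i j * a (s i) (s j)

/-- Fitness of player `i` in state `s` at selection intensity `β`. -/
noncomputable def gameFitness {N n : ℕ} (E : Matrix (Fin N) (Fin N) ℝ)
    (a : Fin n → Fin n → ℝ) (β : ℝ) (s : Fin N → Fin n) (i : Fin N) : ℝ :=
  Real.exp (β * gamePayoff E a s i)

/-- Transition kernel of the birth-death process with interaction graph `E`,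
dispersal graph `D`, payoff matrix `a`, selection intensity `β` and
strategy-mutation rate `ε`. -/
noncomputable def bdKernel {N n : ℕ} (E D : Matrix (Fin N) (Fin N) ℝ)
    (a : Fin n → Fin n → ℝ) (β ε : ℝ) (s s' : Fin N → Fin n) : ℝ :=
  ∑ i, ∑ j, ∑ c : Fin n,
    (gameFitness E a β s i / ∑ k, gameFitness E a β s k) *
      (D i j / ∑ k, D i k) *
      ((1 - ε) * (if c = s i then 1 else 0) + ε / n) *
      (if s' = Function.update s j c then 1 else 0)

theorem bdKernel_invariant_of_automorphism {N n : ℕ} (hN : 0 < N) (hn : 0 < n)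
    (E D : Matrix (Fin N) (Fin N) ℝ)
    (hE0 : ∀ i j, 0 ≤ E i j) (hD0 : ∀ i j, 0 ≤ D i j)
    (hDrow : ∀ i, 0 < ∑ k, D i k)
    (a : Fin n → Fin n → ℝ) (β : ℝ) (hβ : 0 ≤ β)
    (ε : ℝ) (hε : ε ∈ Set.Icc (0 : ℝ) 1)
    (π : Equiv.Perm (Fin N))
    (hπE : ∀ i j, E (π i) (π j) = E i j) (hπD : ∀ i j, D (π i) (π j) = D i j) :
    ∀ s s' : Fin N → Fin n,
      bdKernel E D a β ε (s ∘ π) (s' ∘ π) = bdKernel E D a β ε s s' := by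
  intro s s'
  have hpay : ∀ i, gamePayoff E a (s ∘ π) i = gamePayoff E a s (π i) := by
    intro i
    unfold gamePayoff
    rw [← Equiv.sum_comp π (fun j => E (π i) j * a (s (π i)) (s j))]
    exact Finset.sum_congr rfl fun j _ => by simp [hπE]
  have hfit : ∀ i, gameFitness E a β (s ∘ π) i = gameFitness E a β s (π i) := by
    intro i; unfold gameFitness; rw [hpay]
  have hfitsum : ∑ k, gameFitness E a β (s ∘ π) k = ∑ k, gameFitness E a β s k := by
    rw [← Equiv.sum_comp π (gameFitness E a β s)]
    exact Finset.sum_congr rfl fun k _ => hfit k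
  have hDrowπ : ∀ i, ∑ k, D (π i) k = ∑ k, D i k := by
    intro i
    rw [← Equiv.sum_comp π (fun k => D (π i) k)]
    exact Finset.sum_congr rfl fun k _ => hπD i k
  unfold bdKernel
  rw [← Equiv.sum_comp π (fun i => ∑ j, ∑ c : Fin n,
      (gameFitness E a β s i / ∑ k, gameFitness E a β s k) *
        (D i j / ∑ k, D i k) *
        ((1 - ε) * (if c = s i then 1 else 0) + ε / n) *
        (if s' = Function.update s j c then 1 else 0))]
  refine Finset.sum_congr rfl fun i _ => ?_
  rw [← Equiv.sum_comp π (fun j => ∑ c : Fin n,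
      (gameFitness E a β s (π i) / ∑ k, gameFitness E a β s k) *
        (D (π i) j / ∑ k, D (π i) k) *
        ((1 - ε) * (if c = s (π i) then 1 else 0) + ε / n) *
        (if s' = Function.update s j c then 1 else 0))]
  refine Finset.sum_congr rfl fun j _ => Finset.sum_congr rfl fun c _ => ?_
  have hupd : (s' ∘ π = Function.update (s ∘ π) j c) ↔
      (s' = Function.update s (π j) c) := by
    constructor
    · intro h
      funext x
      have := congrFun h (π.symm x)
      simp only [Function.comp] at this
      rw [Equiv.apply_symm_apply] at this
      rw [this]
      by_cases hx : x = π j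
      · subst hx; simp [Function.update]
      · have hx' : π.symm x ≠ j := fun h' => hx (by rw [← h']; simp)
        simp [Function.update_of_ne hx, Function.update_of_ne hx']
    · intro h
      funext x
      simp only [Function.comp, h]
      by_cases hx : x = j
      · subst hx; simp
      · have hx' : π x ≠ π j := fun h' => hx (π.injective h')
        simp [Function.update_of_ne hx, Function.update_of_ne hx']
  simp only [Function.comp_apply, hfit, hπD, hDrowπ]
  rw [Equiv.sum_comp π (gameFitness E a β s), if_congr hupd rfl rfl]
end

section
/- Let S be a type (of strategies), N : ℕ, and T : (Fin N → S) → (Fin N → S) → ℝ a transition kernel on strategy profiles such that T (s ∘ π) (s' ∘ π) = T s s' for every permutation π : Equiv.Perm (Fin N) and all s, s' (the population is well-mixed). Then for any two states s, s' : Fin N → S such that for every strategy c : S the number of players using c is the same in s and in s' (i.e. Finset.card {k | s k = c} = Finset.card {k | s' k = c} for all c), there exists a bijection φ of Fin N → S with T x y = T (φ x) (φ y) for all x, y, φ s = s', and φ (Function.const (Fin N) c) = Function.const (Fin N) c for every c : S. Thus in a well-mixed population any two states with the same strategy counts (in particular, any two m-mutant states) are evolutionarily equivalent. -/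
theorem well_mixed_states_with_equal_counts_equivalent {S : Type*} [DecidableEq S] {N : ℕ}
    (T : (Fin N → S) → (Fin N → S) → ℝ)
    (hwm : ∀ (π : Equiv.Perm (Fin N)) (s s' : Fin N → S),
      T (s ∘ π) (s' ∘ π) = T s s')
    (s s' : Fin N → S)
    (hcount : ∀ c : S,
      (Finset.univ.filter fun k => s k = c).card =
        (Finset.univ.filter fun k => s' k = c).card) :
    ∃ φ : (Fin N → S) ≃ (Fin N → S),
      (∀ x y, T x y = T (φ x) (φ y)) ∧
      φ s = s' ∧
      (∀ c : S, φ (Function.const (Fin N) c) = Function.const (Fin N) c) := by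
  -- build a permutation π with s ∘ π = s'
  have hmem : ∀ k : Fin N, k ∈ Finset.univ.filter fun j => s' j = s' k := by
    intro k; simp
  let e : ∀ c : S, (Finset.univ.filter fun j => s' j = c) ≃
      (Finset.univ.filter fun j => s j = c) :=
    fun c => Finset.equivOfCardEq (hcount c).symm
  let f : Fin N → Fin N := fun k => ((e (s' k)) ⟨k, hmem k⟩ : Fin N)
  have hf : ∀ k, s (f k) = s' k := by
    intro k
    have := ((e (s' k)) ⟨k, hmem k⟩).2
    simp only [Finset.mem_filter] at this
    exact this.2
  have fa_eq : ∀ (k : Fin N) (c : S) (h : s' k = c),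
      f k = ((e c) ⟨k, by simp [h]⟩ : Fin N) := by
    intro k c h; subst h; rfl
  have hinj : Function.Injective f := by
    intro a b hab
    have hs : s' a = s' b := by rw [← hf a, ← hf b, hab]
    have h1 := fa_eq a (s' a) rfl
    have h2 := fa_eq b (s' a) hs.symm
    rw [h1, h2] at hab
    have := (e (s' a)).injective (Subtype.ext hab)
    simpa using congrArg Subtype.val this
  let π : Equiv.Perm (Fin N) := Equiv.ofBijective f
    ((Finite.injective_iff_bijective).mp hinj)
  have hπ : s ∘ π = s' := by
    funext k; exact hf k
  refine ⟨Equiv.arrowCongr π.symm (Equiv.refl S), ?_, ?_, ?_⟩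
  · intro x y
    have := hwm π x y
    simpa [Equiv.arrowCongr, Function.comp] using this.symm
  · simpa [Equiv.arrowCongr, Function.comp] using hπ
  · intro c
    funext k
    rfl
end

section
/- Let N n : ℕ with 0 < n, let E : Matrix (Fin N) (Fin N) ℝ, let a : Fin N → Fin N → Fin n → Fin n → ℝ be a family of payoff matrices, let σ1 σ2 σ3 : ℝ, let r : Fin n, and let k : ℝ satisfy k * N > 0 and ∑ i, ∑ j, E i j = k * N. Define the spatially averaged payoff matrix ā s t = (1 / (k * N)) * ∑ i, ∑ j, E i j * a i j s t. For any n × n real matrix m write m** = (1/n) * ∑ s, m s s, m_{r*} = (1/n) * ∑ s, m r s, m_{*r} = (1/n) * ∑ s, m s r, and m̄ = (1/n²) * ∑ s, ∑ t, m s t. Then ∑ i, ∑ j, E i j * (σ1 * (a i j r r − (a i j)**) + σ2 * ((a i j)_{r*} − (a i j)_{*r}) + σ3 * ((a i j)_{r*} − (a i j)‾)) > 0 if and only if σ1 * (ā r r − ā**) + σ2 * (ā_{r*} − ā_{*r}) + σ3 * (ā_{r*} − ā‾) > 0. Hence, when the structure coefficients are independent of i and j, strategy r is favored under the asymmetric selection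 condition if and only if it is favored under Tarnita's selection condition for the spatially averaged symmetric game. -/
/-- Spatial average of the family of payoff matrices `a i j` with weights
`E i j`, normalized by `k * N`. -/
noncomputable def spatialAverage {N n : ℕ} (E : Matrix (Fin N) (Fin N) ℝ)
    (a : Fin N → Fin N → Fin n → Fin n → ℝ) (k : ℝ) (s t : Fin n) : ℝ :=
  (1 / (k * N)) * ∑ i, ∑ j, E i j * a i j s t

theorem asymmetric_selection_iff_spatial_average {N n : ℕ} (hn : 0 < n)
    (E : Matrix (Fin N) (Fin N) ℝ)
    (a : Fin N → Fin N → Fin n → Fin n → ℝ)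
    (σ1 σ2 σ3 : ℝ) (r : Fin n) (k : ℝ)
    (hk : k * N > 0) (hE : ∑ i, ∑ j, E i j = k * N) :
    (∑ i, ∑ j, E i j *
        (σ1 * (a i j r r - (1 / n) * ∑ s, a i j s s) +
         σ2 * ((1 / n) * ∑ s, a i j r s - (1 / n) * ∑ s, a i j s r) +
         σ3 * ((1 / n) * ∑ s, a i j r s - (1 / n ^ 2) * ∑ s, ∑ t, a i j s t)) > 0)
      ↔
    (σ1 * (spatialAverage E a k r r - (1 / n) * ∑ s, spatialAverage E a k s s) +
     σ2 * ((1 / n) * ∑ s, spatialAverage E a k r s -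
           (1 / n) * ∑ s, spatialAverage E a k s r) +
     σ3 * ((1 / n) * ∑ s, spatialAverage E a k r s -
           (1 / n ^ 2) * ∑ s, ∑ t, spatialAverage E a k s t) > 0) := by
  set c : ℝ := 1 / (k * N) with hc
  have hcpos : 0 < c := by rw [hc]; positivity
  set P : ℝ := ∑ i, ∑ j, E i j * a i j r r with hP
  set Q : ℝ := ∑ i, ∑ j, ∑ s, E i j * a i j s s with hQ
  set R : ℝ := ∑ i, ∑ j, ∑ s, E i j * a i j r s with hR
  set S : ℝ := ∑ i, ∑ j, ∑ s, E i j * a i j s r with hS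
  set T : ℝ := ∑ i, ∑ j, ∑ s, ∑ t, E i j * a i j s t with hT
  have swap3 : ∀ (g : Fin N → Fin N → Fin n → ℝ),
      (∑ s, ∑ i, ∑ j, g i j s) = ∑ i, ∑ j, ∑ s, g i j s := by
    intro g
    rw [Finset.sum_comm]
    exact Finset.sum_congr rfl fun i _ => Finset.sum_comm
  have hlhs : (∑ i, ∑ j, E i j *
        (σ1 * (a i j r r - (1 / n) * ∑ s, a i j s s) +
         σ2 * ((1 / n) * ∑ s, a i j r s - (1 / n) * ∑ s, a i j s r) +
         σ3 * ((1 / n) * ∑ s, a i j r s - (1 / n ^ 2) * ∑ s, ∑ t, a i j s t)))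
      = σ1 * (P - (1/n) * Q) + σ2 * ((1/n) * R - (1/n) * S)
        + σ3 * ((1/n) * R - (1/n^2) * T) := by
    rw [hP, hQ, hR, hS, hT]
    simp only [mul_sub, Finset.mul_sum, ← Finset.sum_sub_distrib, ← Finset.sum_add_distrib]
    refine Finset.sum_congr rfl fun i _ => Finset.sum_congr rfl fun j _ => ?_
    simp only [mul_add, mul_sub, Finset.mul_sum]
    ring_nf
  have hsa1 : spatialAverage E a k r r = c * P := by rw [spatialAverage, hP, hc]
  have hsa2 : (∑ s, spatialAverage E a k s s) = c * Q := by
    simp only [spatialAverage, ← hc, ← Finset.mul_sum]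
    rw [hQ, swap3 (fun i j s => E i j * a i j s s)]
  have hsa3 : (∑ s, spatialAverage E a k r s) = c * R := by
    simp only [spatialAverage, ← hc, ← Finset.mul_sum]
    rw [hR, swap3 (fun i j s => E i j * a i j r s)]
  have hsa4 : (∑ s, spatialAverage E a k s r) = c * S := by
    simp only [spatialAverage, ← hc, ← Finset.mul_sum]
    rw [hS, swap3 (fun i j s => E i j * a i j s r)]
  have hsa5 : (∑ s, ∑ t, spatialAverage E a k s t) = c * T := by
    simp only [spatialAverage, ← hc, ← Finset.mul_sum]
    rw [hT]
    refine congrArg _ ?_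
    calc (∑ s : Fin n, ∑ t : Fin n, ∑ i, ∑ j, E i j * a i j s t)
        = ∑ s : Fin n, ∑ i, ∑ j, ∑ t, E i j * a i j s t :=
          Finset.sum_congr rfl fun s _ => swap3 (fun i j t => E i j * a i j s t)
      _ = ∑ i, ∑ j, ∑ s, ∑ t, E i j * a i j s t :=
          swap3 (fun i j s => ∑ t, E i j * a i j s t)
  rw [hlhs, hsa1, hsa2, hsa3, hsa4, hsa5]
  have key : σ1 * (c * P - 1 / ↑n * (c * Q)) + σ2 * (1 / ↑n * (c * R) - 1 / ↑n * (c * S)) +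
        σ3 * (1 / ↑n * (c * R) - 1 / ↑n ^ 2 * (c * T))
      = c * (σ1 * (P - 1 / ↑n * Q) + σ2 * (1 / ↑n * R - 1 / ↑n * S) +
        σ3 * (1 / ↑n * R - 1 / ↑n ^ 2 * T)) := by ring
  rw [key]
  constructor
  · exact fun h => mul_pos hcpos h
  · intro h
    by_contra hle
    push_neg at hle
    nlinarith
end

section
/- Let S and B be finite types, and for each b : B let T b be a row-stochastic matrix on S with a unique stationary distribution μ b. Define the matrix T' on S × B by T' (s, b) (s', b') = (if b' = b then (T b) s s' else 0). Then for every stationary distribution μ' of T' there exists c : B → ℝ with c b ≥ 0 for all b such that μ' (s, b) = c b * μ b s for all s : S and b : B. -/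
/-!
`T'` is the block-diagonal matrix with blocks `T b`, so the slice `s ↦ μ' (s, b)` of a stationary
vector of `T'` is a nonnegative left fixed vector of `T b`. Normalized by its mass `c b` (when
nonzero) it is a stationary distribution of `T b`, hence equals `μ b` by uniqueness.
-/

open Finset Matrix

theorem vecMul_blockDiagonal_apply {S B R : Type*} [Fintype S] [Fintype B] [DecidableEq B]
    [NonUnitalNonAssocSemiring R] (T : B → Matrix S S R) (v : S × B → R) (s : S) (b : B) :
    (v ᵥ* blockDiagonal T) (s, b) = ((fun s' => v (s', b)) ᵥ* T b) s := by
  simp only [vecMul, dotProduct, Fintype.sum_prod_type, blockDiagonal_apply]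
  refine sum_congr rfl fun s' _ => ?_
  rw [sum_eq_single b (fun b' _ hb' => by rw [if_neg hb', mul_zero]) (by simp), if_pos rfl]

theorem eq_sum_smul_of_vecMul_eq_self {S R : Type*} [Fintype S] [Field R] [LinearOrder R]
    [IsStrictOrderedRing R] (T : Matrix S S R) (μ : S → R)
    (huniq : ∀ ν : S → R, 0 ≤ ν → ∑ s, ν s = 1 → ν ᵥ* T = ν → ν = μ)
    (ν : S → R) (hν0 : 0 ≤ ν) (hν : ν ᵥ* T = ν) : ν = (∑ s, ν s) • μ := by
  set c := ∑ s, ν s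
  rcases eq_or_ne c 0 with hc | hc
  · rw [hc, zero_smul]
    funext s
    exact (sum_eq_zero_iff_of_nonneg fun s _ => hν0 s).mp hc s (mem_univ s)
  · have hnormalized : c⁻¹ • ν = μ := by
      refine huniq _ (smul_nonneg (inv_nonneg.mpr (sum_nonneg fun s _ => hν0 s)) hν0) ?_ ?_
      · simp only [Pi.smul_apply, smul_eq_mul, ← mul_sum, inv_mul_cancel₀ hc, c]
      · rw [smul_vecMul, hν]
    rw [← hnormalized, smul_inv_smul₀ hc]

theorem product_chain_stationary_decomposition_general {S B : Type*} [Fintype S] [Fintype B]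
    [DecidableEq B]
    (T : B → Matrix S S ℝ)
    (μ : B → S → ℝ)
    (huniq : ∀ (b : B) (ν : S → ℝ), (∀ s, 0 ≤ ν s) → (∑ s, ν s = 1) →
      (∀ s, ∑ s', ν s' * T b s' s = ν s) → ν = μ b)
    (T' : Matrix (S × B) (S × B) ℝ)
    (hT' : ∀ (s s' : S) (b b' : B),
      T' (s, b) (s', b') = if b' = b then T b s s' else 0)
    (μ' : S × B → ℝ)
    (hμ'0 : ∀ x, 0 ≤ μ' x)
    (hμ'stat : ∀ x, ∑ x', μ' x' * T' x' x = μ' x) :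
    ∃ c : B → ℝ, (∀ b, 0 ≤ c b) ∧ ∀ (s : S) (b : B), μ' (s, b) = c b * μ b s := by
  have hblock : T' = blockDiagonal T := by
    ext ⟨s, b⟩ ⟨s', b'⟩
    rw [hT', blockDiagonal_apply']
    exact if_congr eq_comm rfl rfl
  refine ⟨fun b => ∑ s, μ' (s, b), fun b => sum_nonneg fun s _ => hμ'0 _, fun s b => ?_⟩
  have hslice : (fun s => μ' (s, b)) ᵥ* T b = fun s => μ' (s, b) := by
    funext s
    rw [← vecMul_blockDiagonal_apply, ← hblock]
    exact hμ'stat (s, b)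
  exact congrFun (eq_sum_smul_of_vecMul_eq_self (T b) (μ b)
    (fun ν hν0 hν1 hν => huniq b ν hν0 hν1 (congrFun hν)) _ (fun s => hμ'0 _) hslice) s

theorem product_chain_stationary_decomposition {S B : Type*} [Fintype S] [Fintype B]
    [DecidableEq B]
    (T : B → Matrix S S ℝ)
    (hT0 : ∀ b s s', 0 ≤ T b s s') (hT1 : ∀ b s, ∑ s', T b s s' = 1)
    (μ : B → S → ℝ)
    (hμ0 : ∀ b s, 0 ≤ μ b s) (hμ1 : ∀ b, ∑ s, μ b s = 1)
    (hμstat : ∀ b s, ∑ s', μ b s' * T b s' s = μ b s)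
    (huniq : ∀ (b : B) (ν : S → ℝ), (∀ s, 0 ≤ ν s) → (∑ s, ν s = 1) →
      (∀ s, ∑ s', ν s' * T b s' s = ν s) → ν = μ b)
    (T' : Matrix (S × B) (S × B) ℝ)
    (hT' : ∀ (s s' : S) (b b' : B),
      T' (s, b) (s', b') = if b' = b then T b s s' else 0)
    (μ' : S × B → ℝ)
    (hμ'0 : ∀ x, 0 ≤ μ' x) (hμ'1 : ∑ x, μ' x = 1)
    (hμ'stat : ∀ x, ∑ x', μ' x' * T' x' x = μ' x) :
    ∃ c : B → ℝ, (∀ b, 0 ≤ c b) ∧ ∀ (s : S) (b : B), μ' (s, b) = c b * μ b s :=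
  product_chain_stationary_decomposition_general T μ huniq T' hT' μ' hμ'0 hμ'stat
end

section
/- Let T be a row-stochastic matrix on a finite type S that is irreducible (for all s, s' : S there exists m : ℕ with 0 < m and (T ^ m) s s' > 0), let μ be a stationary distribution of T, and let L := 1 - T be the Laplacian matrix. Then for every vector ν : S → ℝ and every state s : S, det (L.updateColumn s ν) = (∑ x, μ x * ν x) * det (L.updateColumn s (fun _ => 1)), where L.updateColumn s w denotes the matrix obtained from L by replacing the column indexed by s with the vector w. In particular, when det (L.updateColumn s (fun _ => 1)) ≠ 0, the stationary average μ · ν equals det (L.updateColumn s ν) / det (L.updateColumn s (fun _ => 1)) for every s. -/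
/-!
Expanding along column `s`, `det (L.updateCol s ν) = w ⬝ᵥ ν` with `w` the `s`-th row of
`adjugate L`. Since `L *ᵥ 1 = 0`, `L` is singular, so `w ᵥ* L = 0`, i.e. `w` is stationary for
`T`. For an irreducible stochastic matrix the stationary vectors form a line: if `z` is
stationary then so is `|z|`, and a nonnegative stationary vector vanishing at one state vanishes
everywhere, since every state feeds mass into that one through some power of `T`. Hence
`w = c • μ`, so the two determinants are `c * (μ ⬝ᵥ ν)` and `c * ∑ x, μ x = c`.
-/

open Finset

namespace Matrix

variable {n : Type*} [Fintype n] [DecidableEq n]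

theorem det_updateCol_eq_adjugate_dotProduct {α : Type*} [CommRing α] (A : Matrix n n α) (i : n)
    (b : n → α) : (A.updateCol i b).det = A.adjugate i ⬝ᵥ b := by
  rw [← cramer_apply, cramer_eq_adjugate_mulVec]
  rfl

theorem adjugate_apply_vecMul_eq_zero {α : Type*} [CommRing α] {A : Matrix n n α}
    (hA : A.det = 0) (i : n) : A.adjugate i ᵥ* A = 0 := by
  rw [← mul_apply_eq_vecMul, adjugate_mul, hA, zero_smul]
  rfl

theorem vecMul_one_sub_eq_zero_iff {R : Type*} [Ring R] {T : Matrix n n R} {v : n → R} :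
    v ᵥ* (1 - T) = 0 ↔ v ᵥ* T = v := by
  rw [vecMul_sub, vecMul_one, sub_eq_zero, eq_comm]

theorem vecMul_pow_eq_self {R : Type*} [Semiring R] {T : Matrix n n R} {v : n → R}
    (hv : v ᵥ* T = v) (k : ℕ) : v ᵥ* (T ^ k) = v := by
  induction k with
  | zero => exact vecMul_one v
  | succ k ih => rw [pow_succ, ← vecMul_vecMul, ih, hv]

theorem det_one_sub_eq_zero_of_mem_rowStochastic [Nonempty n] {R : Type*} [CommRing R] [IsDomain R]
    [PartialOrder R] [IsOrderedRing R] {T : Matrix n n R} (hT : T ∈ rowStochastic R n) :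
    (1 - T).det = 0 :=
  exists_mulVec_eq_zero_iff.1
    ⟨1, one_ne_zero, by rw [sub_mulVec, one_mulVec, one_vecMul_of_mem_rowStochastic hT, sub_self]⟩

section LinearOrderedRing

variable {R : Type*} [Ring R] [LinearOrder R] [IsStrictOrderedRing R] {T : Matrix n n R}

theorem abs_vecMul_eq_self (hT : T ∈ rowStochastic R n) {v : n → R} (hv : v ᵥ* T = v) :
    |v| ᵥ* T = |v| := by
  have hle : ∀ j, |v j| ≤ (|v| ᵥ* T) j := fun j =>
    calc |v j| = |∑ i, v i * T i j| := by rw [← congrFun hv j]; rfl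
      _ ≤ ∑ i, |v i * T i j| := abs_sum_le_sum_abs _ _
      _ = (|v| ᵥ* T) j := by
        simp only [abs_mul, abs_of_nonneg (nonneg_of_mem_rowStochastic hT)]
        rfl
  have hsum : ∑ j, |v j| = ∑ j, (|v| ᵥ* T) j := by
    rw [← dotProduct_one, ← dotProduct_one, ← dotProduct_mulVec,
      one_vecMul_of_mem_rowStochastic hT]
    rfl
  funext j
  exact ((sum_eq_sum_iff_of_le fun j _ => hle j).1 hsum j (mem_univ j)).symm

theorem eq_zero_of_vecMul_eq_self_of_apply_eq_zero (hT : T.IsIrreducible) {v : n → R}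
    (hv0 : ∀ i, 0 ≤ v i) (hv : v ᵥ* T = v) {j : n} (hj : v j = 0) : v = 0 := by
  funext i
  obtain ⟨k, -, hk⟩ := (isIrreducible_iff_exists_pow_pos hT.nonneg).1 hT i j
  have hterm : v i * (T ^ k) i j ≤ (v ᵥ* T ^ k) j :=
    single_le_sum (f := fun i => v i * (T ^ k) i j)
      (fun l _ => mul_nonneg (hv0 l) (pow_apply_nonneg hT.nonneg k l j)) (mem_univ i)
  rw [vecMul_pow_eq_self hv, hj] at hterm
  exact le_antisymm (nonpos_of_mul_nonpos_left hterm hk) (hv0 i)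

end LinearOrderedRing

theorem exists_eq_smul_of_vecMul_eq_self {R : Type*} [Field R] [LinearOrder R]
    [IsStrictOrderedRing R] {T : Matrix n n R} (hT : T ∈ rowStochastic R n)
    (hirr : T.IsIrreducible) {μ w : n → R} (hμ : μ ᵥ* T = μ) (hμ0 : μ ≠ 0) (hw : w ᵥ* T = w) :
    ∃ c : R, w = c • μ := by
  obtain ⟨j, hj⟩ := Function.ne_iff.1 hμ0
  refine ⟨w j / μ j, sub_eq_zero.1 ?_⟩
  set z := w - (w j / μ j) • μ
  have hz : z ᵥ* T = z := by rw [sub_vecMul, smul_vecMul, hμ, hw]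
  have hzj : |z| j = 0 := by simp [z, div_mul_cancel₀ _ hj]
  have habs := eq_zero_of_vecMul_eq_self_of_apply_eq_zero hirr (fun i => abs_nonneg (z i))
    (abs_vecMul_eq_self hT hz) hzj
  funext i
  exact abs_eq_zero.1 (congrFun habs i)

end Matrix

open Matrix

theorem stationary_average_det_formula_general {S : Type*} [Fintype S] [DecidableEq S]
    (T : Matrix S S ℝ)
    (hT0 : ∀ s s', 0 ≤ T s s') (hT1 : ∀ s, ∑ s', T s s' = 1)
    (hirr : ∀ s s' : S, ∃ m : ℕ, 0 < m ∧ 0 < (T ^ m) s s')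
    (μ : S → ℝ)
    (hμ1 : ∑ s, μ s = 1)
    (hμstat : ∀ s, ∑ s', μ s' * T s' s = μ s)
    (L : Matrix S S ℝ) (hL : L = 1 - T) :
    ∀ (ν : S → ℝ) (s : S),
      Matrix.det (L.updateCol s ν) =
        (∑ x, μ x * ν x) * Matrix.det (L.updateCol s fun _ => 1) := by
  intro ν s
  subst hL
  have hT : T ∈ rowStochastic ℝ S := mem_rowStochastic_iff_sum.2 ⟨hT0, hT1⟩
  have hT_irr : T.IsIrreducible := (isIrreducible_iff_exists_pow_pos hT0).2 hirr
  obtain ⟨j, -, hj⟩ := exists_ne_zero_of_sum_ne_zero (by simp [hμ1] : ∑ s, μ s ≠ 0)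
  have : Nonempty S := ⟨j⟩
  have hw : (1 - T).adjugate s ᵥ* T = (1 - T).adjugate s :=
    vecMul_one_sub_eq_zero_iff.1
      (adjugate_apply_vecMul_eq_zero (det_one_sub_eq_zero_of_mem_rowStochastic hT) s)
  obtain ⟨c, hc⟩ := exists_eq_smul_of_vecMul_eq_self hT hT_irr (funext hμstat)
    (Function.ne_iff.2 ⟨j, hj⟩) hw
  rw [det_updateCol_eq_adjugate_dotProduct, det_updateCol_eq_adjugate_dotProduct, hc,
    smul_dotProduct, smul_dotProduct, ← Pi.one_def, dotProduct_one, hμ1, smul_eq_mul,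
    smul_eq_mul, mul_one, mul_comm]
  rfl

theorem stationary_average_det_formula {S : Type*} [Fintype S] [DecidableEq S]
    (T : Matrix S S ℝ)
    (hT0 : ∀ s s', 0 ≤ T s s') (hT1 : ∀ s, ∑ s', T s s' = 1)
    (hirr : ∀ s s' : S, ∃ m : ℕ, 0 < m ∧ 0 < (T ^ m) s s')
    (μ : S → ℝ)
    (hμ0 : ∀ s, 0 ≤ μ s) (hμ1 : ∑ s, μ s = 1)
    (hμstat : ∀ s, ∑ s', μ s' * T s' s = μ s)
    (L : Matrix S S ℝ) (hL : L = 1 - T) :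
    ∀ (ν : S → ℝ) (s : S),
      Matrix.det (L.updateCol s ν) =
        (∑ x, μ x * ν x) * Matrix.det (L.updateCol s fun _ => 1) :=
  stationary_average_det_formula_general T hT0 hT1 hirr μ hμ1 hμstat L hL
end
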